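/- The Huber function is the infimal convolution of the absolute value and half the square: for all x ∈ ℝ, huber(x) = inf{|s| + (1/2)n² : x = n + s, n,s ∈ ℝ}. -/

import Mathlib

/-!
With `c` the clamp of `x` to `[-1, 1]`, one has `huber x = c * x - c ^ 2 / 2` (the Legendre form of
`huber` as the conjugate of `c ^ 2 / 2` restricted to `[-1, 1]`). For any split `x = n + s` this gives
`huber x = (c * n - c ^ 2 / 2) + c * s ≤ n ^ 2 / 2 + |s|`, and the split `n = c`, `s = x - c`
attains the bound.
-/

/-- The Huber function. -/
noncomputable def huber (x : ℝ) : ℝ := if |x| ≤ 1 then x ^ 2 / 2 else |x| - 1 / 2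

noncomputable def huberClamp (x : ℝ) : ℝ := max (-1) (min x 1)

lemma abs_huberClamp_le_one (x : ℝ) : |huberClamp x| ≤ 1 := by
  unfold huberClamp
  rw [abs_le]
  constructor <;> simp

lemma huber_eq_huberClamp_mul_sub (x : ℝ) :
    huber x = huberClamp x * x - huberClamp x ^ 2 / 2 := by
  unfold huber huberClamp
  rcases lt_or_ge x (-1) with hx | hx
  · rw [if_neg (by rw [abs_of_neg (by linarith)]; linarith), abs_of_neg (by linarith),
      min_eq_left (by linarith), max_eq_left hx.le]
    ring
  rcases le_or_gt x 1 with hx' | hx'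
  · rw [if_pos (abs_le.mpr ⟨hx, hx'⟩), min_eq_left hx', max_eq_right hx]
    ring
  · rw [if_neg (by rw [abs_of_pos (by linarith)]; linarith), abs_of_pos (by linarith),
      min_eq_right hx'.le, max_eq_right (by norm_num)]
    ring

lemma huberClamp_mul_sub_self (x : ℝ) :
    huberClamp x * (x - huberClamp x) = |x - huberClamp x| := by
  unfold huberClamp
  rcases lt_or_ge x (-1) with hx | hx
  · rw [min_eq_left (by linarith), max_eq_left hx.le, abs_of_neg (by linarith)]
    ring
  rcases le_or_gt x 1 with hx' | hx'
  · rw [min_eq_left hx', max_eq_right hx]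
    simp
  · rw [min_eq_right hx'.le, max_eq_right (by norm_num), abs_of_pos (by linarith)]
    ring

lemma huber_eq_abs_sub_huberClamp_add (x : ℝ) :
    huber x = |x - huberClamp x| + 1 / 2 * huberClamp x ^ 2 := by
  rw [huber_eq_huberClamp_mul_sub, ← huberClamp_mul_sub_self]
  ring

lemma huber_add_le (n s : ℝ) : huber (n + s) ≤ |s| + 1 / 2 * n ^ 2 := by
  set c := huberClamp (n + s)
  have hcn : c * n - c ^ 2 / 2 ≤ 1 / 2 * n ^ 2 := by nlinarith [sq_nonneg (n - c)]
  have hcs : c * s ≤ |s| :=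
    calc c * s ≤ |c| * |s| := abs_mul c s ▸ le_abs_self _
      _ ≤ |s| := mul_le_of_le_one_left (abs_nonneg s) (abs_huberClamp_le_one _)
  calc huber (n + s) = (c * n - c ^ 2 / 2) + c * s := by rw [huber_eq_huberClamp_mul_sub]; ring
    _ ≤ |s| + 1 / 2 * n ^ 2 := by linarith

/-- The Huber function is the infimal convolution of `|·|` and `(1/2)(·)²`. -/
theorem huber_eq_infConv (x : ℝ) :
    huber x = sInf {v : ℝ | ∃ n s : ℝ, x = n + s ∧ v = |s| + (1 / 2) * n ^ 2} := by
  refine (IsLeast.csInf_eq ⟨?_, ?_⟩).symm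
  · exact ⟨huberClamp x, x - huberClamp x, by ring, huber_eq_abs_sub_huberClamp_add x⟩
  · rintro v ⟨n, s, rfl, rfl⟩
    exact huber_add_le n s
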